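/- arXiv:1401.5409 — 8 statements merged into one kernel-verified Lean document; each statement's English description precedes it below -/
import Mathlib

section
/- The ratio A(n)/A(n-1) = (3n-2)!·(n-1)! / ((2n-1)!·(2n-2)!) is a nondecreasing function of n for n ≥ 1. -/
open Finset Nat

/-- `A n = ∏_{k=0}^{n-1} (3k+1)!/(n+k)!`, the ASM numbers (as rationals), with `A 0 = 1`. -/
def A (n : ℕ) : ℚ := ∏ k ∈ Finset.range n, ((3 * k + 1)! : ℚ) / ((n + k)! : ℚ)

/-
The ratio `A (n+1) / A n` telescopes to `(3n+1)! n! / ((2n+1)! (2n)!)`, since passing from `n` to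
`n+1` shifts the window of factorials `n!, …, (2n-1)!` in the denominator to `(n+1)!, …, (2n+1)!`.
Consecutive values of this ratio have quotient
`(3n+2)(3n+3)(3n+4)(n+1) / ((2n+1)(2n+2)²(2n+3))`, which is at least `1` because after cancelling
`3(n+1)²` against `4(n+1)²` it reduces to `3(3n+2)(3n+4) ≥ 4(2n+1)(2n+3)`.
-/

theorem Finset.prod_range_succ_window_mul {M : Type*} [CommMonoid M] (f : ℕ → M) (n : ℕ) :
    (∏ k ∈ range (n + 1), f (n + 1 + k)) * f n =
      (∏ k ∈ range n, f (n + k)) * (f (2 * n) * f (2 * n + 1)) := by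
  have h₁ : ∏ k ∈ range (n + 1), f (n + 1 + k) = (∏ k ∈ range n, f (n + k + 1)) * f (2 * n + 1) := by
    rw [prod_range_succ]
    congr 1
    · exact prod_congr rfl fun k _ => by rw [Nat.add_right_comm]
    · rw [two_mul, Nat.add_right_comm]
  have h₂ : ∏ k ∈ range (n + 1), f (n + k) = (∏ k ∈ range n, f (n + k + 1)) * f n := by
    rw [prod_range_succ']
    rfl
  have h₃ : ∏ k ∈ range (n + 1), f (n + k) = (∏ k ∈ range n, f (n + k)) * f (2 * n) := by
    rw [prod_range_succ, two_mul]
  calc (∏ k ∈ range (n + 1), f (n + 1 + k)) * f n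
      = (∏ k ∈ range (n + 1), f (n + k)) * f (2 * n + 1) := by
        rw [h₁, h₂, mul_right_comm]
    _ = (∏ k ∈ range n, f (n + k)) * (f (2 * n) * f (2 * n + 1)) := by
        rw [h₃, mul_assoc]

lemma A_eq_div (n : ℕ) :
    A n = (∏ k ∈ range n, ((3 * k + 1)! : ℚ)) / ∏ k ∈ range n, ((n + k)! : ℚ) :=
  prod_div_distrib _ _

def asmRatio (n : ℕ) : ℚ := ((3 * n + 1)! * n ! : ℚ) / ((2 * n + 1)! * (2 * n)! : ℚ)

lemma A_succ_div_A (n : ℕ) : A (n + 1) / A n = asmRatio n := by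
  have hwindow := prod_range_succ_window_mul (fun j => (j ! : ℚ)) n
  have hQ : ∀ N, (∏ k ∈ range N, ((N + k)! : ℚ)) ≠ 0 := fun N =>
    prod_ne_zero_iff.2 fun _ _ => by positivity
  have := hQ (n + 1)
  have := hQ n
  rw [A_eq_div, A_eq_div, prod_range_succ, asmRatio]
  field_simp
  linear_combination -hwindow

lemma asmRatio_succ (n : ℕ) :
    asmRatio (n + 1) = asmRatio n *
      ((3 * n + 2) * (3 * n + 3) * (3 * n + 4) * (n + 1) /
        ((2 * n + 1) * (2 * n + 2) * (2 * n + 2) * (2 * n + 3))) := by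
  simp only [asmRatio, show 3 * (n + 1) + 1 = 3 * n + 1 + 1 + 1 + 1 by ring,
    show 2 * (n + 1) = 2 * n + 1 + 1 by ring, factorial_succ]
  push_cast
  field_simp
  ring

lemma one_le_asmRatio_factor (n : ℕ) :
    (1 : ℚ) ≤ (3 * n + 2) * (3 * n + 3) * (3 * n + 4) * (n + 1) /
      ((2 * n + 1) * (2 * n + 2) * (2 * n + 2) * (2 * n + 3)) := by
  rw [one_le_div (by positivity)]
  have key : 4 * (2 * (n : ℚ) + 1) * (2 * n + 3) ≤ 3 * (3 * n + 2) * (3 * n + 4) := by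
    nlinarith [(n.cast_nonneg : (0 : ℚ) ≤ n)]
  nlinarith [mul_le_mul_of_nonneg_left key (sq_nonneg ((n : ℚ) + 1))]

lemma asmRatio_monotone : Monotone asmRatio :=
  monotone_nat_of_le_succ fun n => by
    rw [asmRatio_succ]
    exact le_mul_of_one_le_right (by unfold asmRatio; positivity) (one_le_asmRatio_factor n)

theorem stmt_1 (m n : ℕ) (hm : 1 ≤ m) (hmn : m ≤ n) :
    A m / A (m - 1) ≤ A n / A (n - 1) := by
  obtain ⟨m, rfl⟩ : ∃ m', m = m' + 1 := ⟨m - 1, by omega⟩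
  obtain ⟨n, rfl⟩ : ∃ n', n = n' + 1 := ⟨n - 1, by omega⟩
  simp only [Nat.add_sub_cancel, A_succ_div_A]
  exact asmRatio_monotone (by omega)
end

section
/- For integers i₁ ≥ i₂ ≥ 1, one has A(i₁+1)·A(i₂-1) ≥ A(i₁)·A(i₂). -/
/-!
The quotient `A (n + 1) / A n` is `(3n+1)! n! / ((2n)! (2n+1)!)`, and consecutive quotients of
this sequence are `3(3n+2)(3n+4) / (4(2n+1)(2n+3)) ≥ 1`. So `A` has a nondecreasing ratio of
consecutive terms, and the inequality compares the ratios at `i₂ - 1 ≤ i₁`.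
-/

open Finset Nat

theorem mul_succ_le_succ_mul_of_monotone_ratio {α : Type*} [CommSemiring α] [PartialOrder α]
    [IsOrderedRing α] {f r : ℕ → α} (hf : ∀ n, f (n + 1) = f n * r n) (hr : Monotone r)
    (hf₀ : ∀ n, 0 ≤ f n) {m n : ℕ} (hmn : m ≤ n) : f n * f (m + 1) ≤ f (n + 1) * f m := by
  rw [hf, hf, mul_right_comm (f n), ← mul_assoc]
  exact mul_le_mul_of_nonneg_left (hr hmn) (mul_nonneg (hf₀ n) (hf₀ m))

theorem prod_factorial_add_succ_mul (n : ℕ) :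
    (∏ k ∈ range (n + 1), (n + 1 + k)!) * n ! =
      (∏ k ∈ range n, (n + k)!) * ((2 * n)! * (2 * n + 1)!) := by
  have h := prod_range_succ' (fun k => (n + k)!) n
  rw [prod_range_succ] at h
  rw [prod_range_succ, two_mul]
  simp only [add_zero, add_assoc, add_comm 1] at h ⊢
  rw [mul_right_comm, ← h]
  ring

def succRatio (n : ℕ) : ℚ := (3 * n + 1)! * n ! / ((2 * n)! * (2 * n + 1)!)

theorem A_succ (n : ℕ) : A (n + 1) = A n * succRatio n := by
  have h := congrArg (Nat.cast (R := ℚ)) (prod_factorial_add_succ_mul n)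
  push_cast at h
  simp only [A, succRatio, prod_div_distrib]
  rw [prod_range_succ (fun k => ((3 * k + 1)! : ℚ)) n]
  field_simp
  linear_combination -h

theorem A_pos (n : ℕ) : 0 < A n :=
  prod_pos fun _ _ => by positivity

theorem succRatio_succ (n : ℕ) :
    succRatio (n + 1) =
      succRatio n * (3 * (3 * n + 2) * (3 * n + 4) / (4 * (2 * n + 1) * (2 * n + 3))) := by
  simp only [succRatio, mul_add, mul_one, show 3 * n + 3 + 1 = 3 * n + 1 + 1 + 1 + 1 by ring,
    show 2 * n + 2 = 2 * n + 1 + 1 by ring, factorial_succ]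
  push_cast
  field_simp
  ring

theorem succRatio_monotone : Monotone succRatio := by
  refine monotone_nat_of_le_succ fun n => ?_
  rw [succRatio_succ]
  refine le_mul_of_one_le_right (by unfold succRatio; positivity) ?_
  rw [one_le_div (by positivity)]
  nlinarith

theorem stmt_2 (i₁ i₂ : ℕ) (h2 : 1 ≤ i₂) (h12 : i₂ ≤ i₁) :
    A (i₁ + 1) * A (i₂ - 1) ≥ A i₁ * A i₂ := by
  obtain ⟨j, rfl⟩ := exists_add_of_le h2
  rw [add_comm 1 j, Nat.add_sub_cancel]
  exact mul_succ_le_succ_mul_of_monotone_ratio A_succ succRatio_monotone (fun n => (A_pos n).le)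
    (by omega)
end

section
/- For all t ≥ 1, A(t-1)/A(t) ≤ (2/3)^{t-1}. -/
open Finset Nat

/-! Passing from `A n` to `A (n + 1)` raises each of the `n` old denominators `(n + k)!` by the
factor `n + 1 + k` and adds the new factor `(3n + 1)!/(2n + 1)! = ∏_{k<n} (2n + 2 + k)`, so
`A n / A (n + 1) = ∏_{k<n} (n + 1 + k)/(2n + 2 + k)`, and every factor is at most `2/3`. -/

lemma cast_factorial_add_div_factorial (c m : ℕ) :
    ((c + m)! : ℚ) / c ! = ∏ k ∈ range m, ((c + 1 + k : ℕ) : ℚ) := by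
  rw [← factorial_mul_ascFactorial, ascFactorial_eq_prod_range]
  push_cast
  exact mul_div_cancel_left₀ _ (by positivity)

lemma A_div_A_succ (n : ℕ) :
    A n / A (n + 1) = ∏ k ∈ range n, ((n + 1 + k : ℚ) / (2 * n + 2 + k)) := by
  set P := ∏ k ∈ range n, ((3 * k + 1)! : ℚ) / (n + 1 + k)!
  have hA : A n = P * ∏ k ∈ range n, ((n + 1 + k : ℕ) : ℚ) := by
    rw [A, ← prod_mul_distrib]
    refine prod_congr rfl fun k _ => ?_
    rw [show n + 1 + k = (n + k) + 1 by ring, factorial_succ (n + k)]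
    push_cast
    field_simp
  have hA_succ : A (n + 1) = P * ∏ k ∈ range n, ((n + 1 + n + 1 + k : ℕ) : ℚ) := by
    rw [A, prod_range_succ, ← cast_factorial_add_div_factorial,
      show 3 * n + 1 = n + 1 + n + n by ring]
  have hP : P ≠ 0 := prod_ne_zero_iff.mpr fun k _ => by positivity
  rw [hA, hA_succ, mul_div_mul_left _ _ hP, ← prod_div_distrib]
  refine prod_congr rfl fun k _ => ?_
  push_cast
  ring

lemma add_div_two_mul_add_le_two_thirds {K : Type*} [Field K] [LinearOrder K]
    [IsStrictOrderedRing K] {a k : K} (ha : 0 < a) (hk₀ : 0 ≤ k) (hk : k ≤ a) :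
    (a + k) / (2 * a + k) ≤ 2 / 3 := by
  rw [div_le_div_iff₀ (by positivity) (by norm_num)]
  linarith

theorem stmt_3 (t : ℕ) (ht : 1 ≤ t) :
    A (t - 1) / A t ≤ (2 / 3 : ℚ) ^ (t - 1) := by
  obtain ⟨n, rfl⟩ : ∃ n, t = n + 1 := ⟨t - 1, by omega⟩
  rw [Nat.add_sub_cancel, A_div_A_succ]
  calc ∏ k ∈ range n, ((n + 1 + k : ℚ) / (2 * n + 2 + k))
      ≤ ∏ _k ∈ range n, (2 / 3 : ℚ) := by
        refine prod_le_prod (fun k _ => by positivity) fun k hk => ?_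
        have hkn : (k : ℚ) ≤ n + 1 := by exact_mod_cast (mem_range.mp hk).le.trans n.le_succ
        convert add_div_two_mul_add_le_two_thirds (a := (n + 1 : ℚ)) (by positivity)
          k.cast_nonneg hkn using 2
        ring
    _ = (2 / 3 : ℚ) ^ n := by rw [prod_const, card_range]
end

section
/- The set of monotone triangles of size n, partially ordered by entry-wise comparison, is a lattice: the entry-wise minimum of two monotone triangles is a monotone triangle and is the infimum, and the entry-wise maximum is a monotone triangle and is the supremum. -/
open Finset

/-- `τ` is a monotone triangle of size `n`: a triangular array `τ i j` (`1 ≤ j ≤ i ≤ n`)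
of integers in `{1,…,n}` (normalized to be `0` outside the triangular domain),
with strictly increasing rows and the interlacing condition. -/
def IsMT (n : ℕ) (τ : ℕ → ℕ → ℕ) : Prop :=
  (∀ i j, ¬(1 ≤ j ∧ j ≤ i ∧ i ≤ n) → τ i j = 0) ∧
  (∀ i j, 1 ≤ j → j ≤ i → i ≤ n → 1 ≤ τ i j ∧ τ i j ≤ n) ∧
  (∀ i j, 1 ≤ j → j < i → i ≤ n → τ i j < τ i (j + 1)) ∧
  (∀ i j, 1 ≤ j → j < i → i ≤ n → τ i j ≤ τ (i - 1) j ∧ τ (i - 1) j ≤ τ i (j + 1))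

/-- Entry-wise comparison of triangular arrays of size `n`. -/
def MTle (n : ℕ) (τ σ : ℕ → ℕ → ℕ) : Prop :=
  ∀ i j, 1 ≤ j → j ≤ i → i ≤ n → τ i j ≤ σ i j

/-- The number of monotone triangles of size `n`. -/
noncomputable def MTcount (n : ℕ) : ℕ := {τ | IsMT n τ}.ncard

/-- The minimal monotone triangle, `τ_min i j = j`. -/
def tmin (n : ℕ) : ℕ → ℕ → ℕ := fun i j => if 1 ≤ j ∧ j ≤ i ∧ i ≤ n then j else 0

/-- The maximal monotone triangle, `τ_max i j = n - i + j`. -/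
def tmax (n : ℕ) : ℕ → ℕ → ℕ := fun i j => if 1 ≤ j ∧ j ≤ i ∧ i ≤ n then n - i + j else 0

/-- Row `i` of `τ` is distinguished: its entries are `1, 2, …, i`. -/
def Distinguished (n : ℕ) (τ : ℕ → ℕ → ℕ) (i : ℕ) : Prop :=
  ∀ l, 1 ≤ l → l ≤ i → τ i l = l

/-- Rank reversal: replace each entry `x` by `n - x + 1` and reverse each row. -/
def bar (n : ℕ) (τ : ℕ → ℕ → ℕ) : ℕ → ℕ → ℕ :=
  fun i j => if 1 ≤ j ∧ j ≤ i ∧ i ≤ n then n - τ i (i - j + 1) + 1 else 0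

/-- Entry-wise infimum of an `r`-tuple. -/
noncomputable def infTuple {r : ℕ} (τs : Fin r → ℕ → ℕ → ℕ) : ℕ → ℕ → ℕ :=
  fun i j => ⨅ m, τs m i j

/-- Entry-wise supremum of an `r`-tuple. -/
noncomputable def supTuple {r : ℕ} (τs : Fin r → ℕ → ℕ → ℕ) : ℕ → ℕ → ℕ :=
  fun i j => ⨆ m, τs m i j

theorem stmt_6 (n : ℕ) (τ₁ τ₂ : ℕ → ℕ → ℕ) (h₁ : IsMT n τ₁) (h₂ : IsMT n τ₂) :
    IsMT n (fun i j => min (τ₁ i j) (τ₂ i j)) ∧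
    MTle n (fun i j => min (τ₁ i j) (τ₂ i j)) τ₁ ∧
    MTle n (fun i j => min (τ₁ i j) (τ₂ i j)) τ₂ ∧
    (∀ σ, IsMT n σ → MTle n σ τ₁ → MTle n σ τ₂ →
      MTle n σ (fun i j => min (τ₁ i j) (τ₂ i j))) ∧
    IsMT n (fun i j => max (τ₁ i j) (τ₂ i j)) ∧
    MTle n τ₁ (fun i j => max (τ₁ i j) (τ₂ i j)) ∧
    MTle n τ₂ (fun i j => max (τ₁ i j) (τ₂ i j)) ∧
    (∀ σ, IsMT n σ → MTle n τ₁ σ → MTle n τ₂ σ →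
      MTle n (fun i j => max (τ₁ i j) (τ₂ i j)) σ) := by

  obtain ⟨z1, b1, s1, t1⟩ := h₁
  obtain ⟨z2, b2, s2, t2⟩ := h₂
  refine ⟨⟨?_, ?_, ?_, ?_⟩, ?_, ?_, ?_, ⟨?_, ?_, ?_, ?_⟩, ?_, ?_, ?_⟩
  · intro i j h; simp [z1 i j h, z2 i j h]
  · intro i j hj hji hin
    exact ⟨le_min (b1 i j hj hji hin).1 (b2 i j hj hji hin).1,
      min_le_of_left_le (b1 i j hj hji hin).2⟩
  · intro i j hj hji hin
    exact lt_min (min_le_left _ _ |>.trans_lt (s1 i j hj hji hin))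
      (min_le_right _ _ |>.trans_lt (s2 i j hj hji hin))
  · intro i j hj hji hin
    exact ⟨min_le_min (t1 i j hj hji hin).1 (t2 i j hj hji hin).1,
      min_le_min (t1 i j hj hji hin).2 (t2 i j hj hji hin).2⟩
  · intro i j _ _ _; exact min_le_left _ _
  · intro i j _ _ _; exact min_le_right _ _
  · intro σ _ hle1 hle2 i j hj hji hin
    exact le_min (hle1 i j hj hji hin) (hle2 i j hj hji hin)
  · intro i j h; simp [z1 i j h, z2 i j h]
  · intro i j hj hji hin
    exact ⟨le_max_of_le_left (b1 i j hj hji hin).1,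
      max_le (b1 i j hj hji hin).2 (b2 i j hj hji hin).2⟩
  · intro i j hj hji hin
    exact max_lt ((s1 i j hj hji hin).trans_le (le_max_left _ _))
      ((s2 i j hj hji hin).trans_le (le_max_right _ _))
  · intro i j hj hji hin
    exact ⟨max_le_max (t1 i j hj hji hin).1 (t2 i j hj hji hin).1,
      max_le_max (t1 i j hj hji hin).2 (t2 i j hj hji hin).2⟩
  · intro i j _ _ _; exact le_max_left _ _
  · intro i j _ _ _; exact le_max_right _ _
  · intro σ _ hle1 hle2 i j hj hji hin
    exact max_le (hle1 i j hj hji hin) (hle2 i j hj hji hin)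
end

section
/- If the entry-wise infimum of monotone triangles τ₁,...,τ_r of size n equals τ_min, then every row index i ∈ {1,...,n} is a distinguished row of at least one τ_j (i.e., τ_j(i,ℓ) = ℓ for all 1 ≤ ℓ ≤ i). -/
open Finset

lemma row_ge (n : ℕ) (τ : ℕ → ℕ → ℕ) (hτ : IsMT n τ) (i : ℕ) (hi : i ≤ n) :
    ∀ l, 1 ≤ l → l ≤ i → l ≤ τ i l := by
  intro l
  induction l with
  | zero => omega
  | succ k ih =>
    intro _ hk
    rcases Nat.eq_zero_or_pos k with hk0 | hk0
    · subst hk0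
      exact (hτ.2.1 i 1 le_rfl (by omega) hi).1
    · have h1 : k ≤ τ i k := ih hk0 (by omega)
      have h2 : τ i k < τ i (k + 1) := hτ.2.2.1 i k hk0 (by omega) hi
      omega

lemma row_gap (n : ℕ) (τ : ℕ → ℕ → ℕ) (hτ : IsMT n τ) (i : ℕ) (hi : i ≤ n) :
    ∀ d l, 1 ≤ l → l + d ≤ i → τ i l + d ≤ τ i (l + d) := by
  intro d
  induction d with
  | zero => intro l _ _; simp
  | succ k ih =>
    intro l hl hld
    have h1 : τ i l < τ i (l + 1) := hτ.2.2.1 i l hl (by omega) hi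
    have h2 : τ i (l + 1) + k ≤ τ i (l + 1 + k) := ih (l + 1) (by omega) (by omega)
    rw [show l + 1 + k = l + (k + 1) by omega] at h2
    omega

theorem stmt_13 (n r : ℕ) (hr : 1 ≤ r) (τs : Fin r → ℕ → ℕ → ℕ)
    (h : ∀ m, IsMT n (τs m)) (hinf : infTuple τs = tmin n) :
    ∀ i, 1 ≤ i → i ≤ n → ∃ m, Distinguished n (τs m) i := by
  intro i hi1 hin
  have hne : Nonempty (Fin r) := ⟨⟨0, hr⟩⟩
  have hval : (⨅ m, τs m i i) = i := by
    have := congrFun (congrFun hinf i) i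
    simp only [infTuple, tmin] at this
    rw [this, if_pos ⟨hi1, le_rfl, hin⟩]
  have hmem : sInf (Set.range fun m => τs m i i) ∈ Set.range fun m => τs m i i :=
    Nat.sInf_mem (Set.range_nonempty _)
  obtain ⟨m, hm⟩ := hmem
  have hsinf : sInf (Set.range fun m => τs m i i) = i := hval
  have hmi : τs m i i = i := by simpa using hm.trans hsinf
  refine ⟨m, fun l hl hli => ?_⟩
  have hge := row_ge n (τs m) (h m) i hin l hl hli
  have hgap := row_gap n (τs m) (h m) i hin (i - l) l hl (by omega)
  rw [show l + (i - l) = i by omega, hmi] at hgap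
  omega
end

section
/- If row i₁ of a monotone triangle τ of size n is distinguished (with 1 ≤ i₁ ≤ n-1), then: (a) the top i₁ rows of τ form a monotone triangle of size i₁; and (b) for every row i > i₁, the first i₁ entries of row i are 1, 2, ..., i₁, and the array obtained from rows i₁+1,...,n by deleting these first i₁ entries and subtracting i₁ from the remaining entries is a monotone triangle of size n - i₁. This correspondence is a bijection between monotone triangles of size n with row i₁ distinguished and pairs of monotone triangles of sizes i₁ and n - i₁. -/
open Finset

-- entries are at least j
lemma mt_ge {n : ℕ} {τ} (h : IsMT n τ) : ∀ j i, 1 ≤ j → j ≤ i → i ≤ n → j ≤ τ i j := by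
  intro j
  induction j with
  | zero => intro i hj; omega
  | succ k ih =>
    intro i hj hji hin
    rcases Nat.eq_zero_or_pos k with h1 | h1
    · subst h1
      simpa using (h.2.1 i 1 le_rfl (by omega) hin).1
    · have hk := ih i h1 (by omega) hin
      have := h.2.2.1 i k (by omega) (by omega) hin
      omega

-- strict increase accumulates
lemma mt_gap {n : ℕ} {τ} (h : IsMT n τ) : ∀ k i j, 1 ≤ j → j + k ≤ i → i ≤ n →
    τ i j + k ≤ τ i (j + k) := by
  intro k
  induction k with
  | zero => intro i j _ _ _; simp
  | succ m ih =>
    intro i j hj hji hin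
    have h1 := ih i j hj (by omega) hin
    have h2 := h.2.2.1 i (j + m) (by omega) (by omega) hin
    have e : j + (m + 1) = j + m + 1 := rfl
    rw [e]; omega

-- diagonal monotonicity
lemma mt_diag {n : ℕ} {τ} (h : IsMT n τ) : ∀ k i j, 1 ≤ j → j ≤ i → i + k ≤ n →
    τ i j ≤ τ (i + k) (j + k) := by
  intro k
  induction k with
  | zero => intro i j _ _ _; simp
  | succ m ih =>
    intro i j hj hji hin
    have h1 := ih i j hj hji (by omega)
    have h2 := (h.2.2.2 (i + m + 1) (j + m) (by omega) (by omega) (by omega)).2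
    have : i + m + 1 - 1 = i + m := by omega
    rw [this] at h2
    have e1 : i + (m + 1) = i + m + 1 := by omega
    have e2 : j + (m + 1) = j + m + 1 := by omega
    rw [e1, e2]; omega

-- the last row of a size-m MT is 1,...,m
lemma mt_lastrow {m : ℕ} {σ} (h : IsMT m σ) : ∀ l, 1 ≤ l → l ≤ m → σ m l = l := by
  intro l hl hlm
  have h1 := mt_ge h l m hl hlm le_rfl
  have h2 := mt_gap h (m - l) m l hl (by omega) le_rfl
  have h3 := (h.2.1 m (l + (m - l)) (by omega) (by omega) le_rfl).2
  omega

-- rows ≥ i₁ have first i₁ entries = j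
lemma mt_rows_eq {n i₁ : ℕ} {τ} (h : IsMT n τ) (hd : Distinguished n τ i₁) :
    ∀ k i, i = i₁ + k → i ≤ n → ∀ j, 1 ≤ j → j ≤ i₁ → τ i j = j := by
  intro k
  induction k with
  | zero => intro i hi hin j hj hji; subst hi; simpa using hd j hj (by omega)
  | succ m ih =>
    intro i hi hin j hj hji
    have hge := mt_ge h j i hj (by omega) hin
    have hle := (h.2.2.2 i j hj (by omega) hin).1
    have := ih (i - 1) (by omega) (by omega) j hj hji
    omega

lemma mt_forward {n i₁ : ℕ} (h1 : 1 ≤ i₁) (h2 : i₁ + 1 ≤ n) {τ} (hτ : IsMT n τ)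
    (hd : Distinguished n τ i₁) :
    IsMT i₁ (fun i j => if 1 ≤ j ∧ j ≤ i ∧ i ≤ i₁ then τ i j else 0) ∧
    (∀ i j, i₁ < i → i ≤ n → 1 ≤ j → j ≤ i₁ → τ i j = j) ∧
    IsMT (n - i₁)
      (fun i j => if 1 ≤ j ∧ j ≤ i ∧ i ≤ n - i₁ then τ (i + i₁) (j + i₁) - i₁ else 0) := by
  have hrows : ∀ i j, i₁ ≤ i → i ≤ n → 1 ≤ j → j ≤ i₁ → τ i j = j := by
    intro i j hi hin hj hji
    exact mt_rows_eq hτ hd (i - i₁) i (by omega) hin j hj hji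
  refine ⟨⟨?_, ?_, ?_, ?_⟩, fun i j hi hin hj hji => hrows i j (by omega) hin hj hji,
    ⟨?_, ?_, ?_, ?_⟩⟩
  · intro i j hc; simp only [if_neg hc]
  · intro i j hj hji hii
    dsimp only; rw [if_pos ⟨hj, hji, hii⟩]
    have hb := (hτ.2.1 i j hj hji (by omega)).1
    have hdiag := mt_diag hτ (i₁ - i) i j hj hji (by omega)
    have e : i + (i₁ - i) = i₁ := by omega
    rw [e] at hdiag
    have := hd (j + (i₁ - i)) (by omega) (by omega)
    omega
  · intro i j hj hji hii
    dsimp only; rw [if_pos ⟨hj, by omega, hii⟩, if_pos ⟨by omega, by omega, hii⟩]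
    exact hτ.2.2.1 i j hj hji (by omega)
  · intro i j hj hji hii
    dsimp only; rw [if_pos ⟨hj, by omega, hii⟩, if_pos ⟨hj, by omega, by omega⟩,
      if_pos ⟨by omega, by omega, hii⟩]
    exact hτ.2.2.2 i j hj hji (by omega)
  · intro i j hc; simp only [if_neg hc]
  · intro i j hj hji hii
    dsimp only; rw [if_pos ⟨hj, hji, hii⟩]
    have hge := mt_ge hτ (j + i₁) (i + i₁) (by omega) (by omega) (by omega)
    have hle := (hτ.2.1 (i + i₁) (j + i₁) (by omega) (by omega) (by omega)).2
    omega
  · intro i j hj hji hii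
    dsimp only; rw [if_pos ⟨hj, by omega, hii⟩, if_pos ⟨by omega, by omega, hii⟩]
    have hs := hτ.2.2.1 (i + i₁) (j + i₁) (by omega) (by omega) (by omega)
    have hge := mt_ge hτ (j + i₁) (i + i₁) (by omega) (by omega) (by omega)
    have e : j + 1 + i₁ = j + i₁ + 1 := by omega
    rw [e]; omega
  · intro i j hj hji hii
    dsimp only; rw [if_pos ⟨hj, by omega, hii⟩, if_pos ⟨hj, by omega, by omega⟩,
      if_pos ⟨by omega, by omega, hii⟩]
    have hint := hτ.2.2.2 (i + i₁) (j + i₁) (by omega) (by omega) (by omega)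
    have e1 : i + i₁ - 1 = i - 1 + i₁ := by omega
    have e2 : j + 1 + i₁ = j + i₁ + 1 := by omega
    rw [e1] at hint
    have hge := mt_ge hτ (j + i₁) (i + i₁) (by omega) (by omega) (by omega)
    have hge2 := mt_ge hτ (j + i₁) (i - 1 + i₁) (by omega) (by omega) (by omega)
    rw [e2]; omega

def glueMT (n i₁ : ℕ) (σ₁ σ₂ : ℕ → ℕ → ℕ) : ℕ → ℕ → ℕ := fun i j =>
  if 1 ≤ j ∧ j ≤ i ∧ i ≤ n then
    if i ≤ i₁ then σ₁ i j else if j ≤ i₁ then j else σ₂ (i - i₁) (j - i₁) + i₁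
  else 0

lemma glue_val {n i₁ : ℕ} {σ₁ σ₂} (i j : ℕ) (hj : 1 ≤ j) (hji : j ≤ i) (hin : i ≤ n) :
    glueMT n i₁ σ₁ σ₂ i j =
      if i ≤ i₁ then σ₁ i j else if j ≤ i₁ then j else σ₂ (i - i₁) (j - i₁) + i₁ := by
  unfold glueMT
  rw [if_pos ⟨hj, hji, hin⟩]

lemma glue_spec {n i₁ : ℕ} (h1 : 1 ≤ i₁) (h2 : i₁ + 1 ≤ n) {σ₁ σ₂}
    (hσ₁ : IsMT i₁ σ₁) (hσ₂ : IsMT (n - i₁) σ₂) :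
    IsMT n (glueMT n i₁ σ₁ σ₂) ∧ Distinguished n (glueMT n i₁ σ₁ σ₂) i₁ := by
  have hlast : ∀ l, 1 ≤ l → l ≤ i₁ → σ₁ i₁ l = l := mt_lastrow hσ₁
  have hb2 : ∀ i j, 1 ≤ j → j ≤ i → i ≤ n - i₁ → 1 ≤ σ₂ i j ∧ σ₂ i j ≤ n - i₁ := hσ₂.2.1
  have hdist : Distinguished n (glueMT n i₁ σ₁ σ₂) i₁ := by
    intro l hl hli
    rw [glue_val i₁ l hl hli (by omega), if_pos le_rfl]
    exact hlast l hl hli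
  refine ⟨⟨?_, ?_, ?_, ?_⟩, hdist⟩
  · intro i j hc; unfold glueMT; rw [if_neg hc]
  · intro i j hj hji hin
    rw [glue_val i j hj hji hin]
    split_ifs with hi hji1
    · have := hσ₁.2.1 i j hj hji hi; omega
    · omega
    · have := hb2 (i - i₁) (j - i₁) (by omega) (by omega) (by omega); omega
  · intro i j hj hji hin
    rw [glue_val i j hj (by omega) hin, glue_val i (j + 1) (by omega) (by omega) hin]
    by_cases hi : i ≤ i₁
    · rw [if_pos hi, if_pos hi]
      exact hσ₁.2.2.1 i j hj hji hi
    · rw [if_neg hi, if_neg hi]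
      by_cases hja : j ≤ i₁
      · rw [if_pos hja]
        by_cases hjb : j + 1 ≤ i₁
        · rw [if_pos hjb]; omega
        · rw [if_neg hjb]
          have := hb2 (i - i₁) (j + 1 - i₁) (by omega) (by omega) (by omega)
          omega
      · rw [if_neg hja, if_neg (by omega : ¬ j + 1 ≤ i₁)]
        have hs := hσ₂.2.2.1 (i - i₁) (j - i₁) (by omega) (by omega) (by omega)
        have e : j + 1 - i₁ = j - i₁ + 1 := by omega
        rw [e]; omega
  · intro i j hj hji hin
    rw [glue_val i j hj (by omega) hin, glue_val (i - 1) j hj (by omega) (by omega),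
      glue_val i (j + 1) (by omega) (by omega) hin]
    by_cases hi : i ≤ i₁
    · rw [if_pos hi, if_pos (by omega : i - 1 ≤ i₁), if_pos hi]
      exact hσ₁.2.2.2 i j hj hji hi
    · rw [if_neg hi, if_neg hi]
      by_cases hi2 : i - 1 ≤ i₁
      · -- i = i₁ + 1
        rw [if_pos hi2]
        have hj1 : j ≤ i₁ := by omega
        rw [if_pos hj1]
        have e1 : i - 1 = i₁ := by omega
        rw [e1, hlast j hj hj1]
        by_cases hjb : j + 1 ≤ i₁
        · rw [if_pos hjb]; omega
        · rw [if_neg hjb]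
          have := hb2 (i - i₁) (j + 1 - i₁) (by omega) (by omega) (by omega)
          omega
      · rw [if_neg hi2]
        by_cases hja : j ≤ i₁
        · rw [if_pos hja, if_pos hja]
          by_cases hjb : j + 1 ≤ i₁
          · rw [if_pos hjb]; omega
          · rw [if_neg hjb]
            have := hb2 (i - i₁) (j + 1 - i₁) (by omega) (by omega) (by omega)
            omega
        · rw [if_neg hja, if_neg hja, if_neg (by omega : ¬ j + 1 ≤ i₁)]
          have hint := hσ₂.2.2.2 (i - i₁) (j - i₁) (by omega) (by omega) (by omega)
          have e1 : i - i₁ - 1 = i - 1 - i₁ := by omega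
          have e2 : j - i₁ + 1 = j + 1 - i₁ := by omega
          rw [e1, e2] at hint
          omega

lemma glue_image {n i₁ : ℕ} (h1 : 1 ≤ i₁) (h2 : i₁ + 1 ≤ n) {σ₁ σ₂}
    (hσ₁ : IsMT i₁ σ₁) (hσ₂ : IsMT (n - i₁) σ₂) :
    (fun i j => if 1 ≤ j ∧ j ≤ i ∧ i ≤ i₁ then glueMT n i₁ σ₁ σ₂ i j else 0) = σ₁ ∧
    (fun i j => if 1 ≤ j ∧ j ≤ i ∧ i ≤ n - i₁ then glueMT n i₁ σ₁ σ₂ (i + i₁) (j + i₁) - i₁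
      else 0) = σ₂ := by
  constructor
  · funext i j
    by_cases hc : 1 ≤ j ∧ j ≤ i ∧ i ≤ i₁
    · rw [if_pos hc]
      unfold glueMT
      rw [if_pos ⟨hc.1, hc.2.1, by omega⟩, if_pos hc.2.2]
    · rw [if_neg hc, hσ₁.1 i j hc]
  · funext i j
    by_cases hc : 1 ≤ j ∧ j ≤ i ∧ i ≤ n - i₁
    · rw [if_pos hc]
      unfold glueMT
      rw [if_pos ⟨by omega, by omega, by omega⟩, if_neg (by omega : ¬ i + i₁ ≤ i₁),
        if_neg (by omega : ¬ j + i₁ ≤ i₁)]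
      have e1 : i + i₁ - i₁ = i := by omega
      have e2 : j + i₁ - i₁ = j := by omega
      rw [e1, e2]
      omega
    · rw [if_neg hc, hσ₂.1 i j hc]
theorem stmt_14 (n i₁ : ℕ) (h1 : 1 ≤ i₁) (h2 : i₁ ≤ n - 1) :
    (∀ τ : ℕ → ℕ → ℕ, IsMT n τ → Distinguished n τ i₁ →
      (IsMT i₁ (fun i j => if 1 ≤ j ∧ j ≤ i ∧ i ≤ i₁ then τ i j else 0) ∧
       (∀ i j, i₁ < i → i ≤ n → 1 ≤ j → j ≤ i₁ → τ i j = j) ∧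
       IsMT (n - i₁)
         (fun i j => if 1 ≤ j ∧ j ≤ i ∧ i ≤ n - i₁ then τ (i + i₁) (j + i₁) - i₁ else 0))) ∧
    Set.BijOn
      (fun τ : ℕ → ℕ → ℕ =>
        ((fun i j => if 1 ≤ j ∧ j ≤ i ∧ i ≤ i₁ then τ i j else 0),
         (fun i j => if 1 ≤ j ∧ j ≤ i ∧ i ≤ n - i₁ then τ (i + i₁) (j + i₁) - i₁ else 0)))
      {τ | IsMT n τ ∧ Distinguished n τ i₁}
      ({σ | IsMT i₁ σ} ×ˢ {σ | IsMT (n - i₁) σ}) := by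
  have h2' : i₁ + 1 ≤ n := by omega
  refine ⟨fun τ hτ hd => mt_forward h1 h2' hτ hd, ?_, ?_, ?_⟩
  · -- MapsTo
    rintro τ ⟨hτ, hd⟩
    obtain ⟨ha, _, hc⟩ := mt_forward h1 h2' hτ hd
    exact ⟨ha, hc⟩
  · -- InjOn
    rintro τ ⟨hτ, hd⟩ τ' ⟨hτ', hd'⟩ heq
    have e1 := congrArg Prod.fst heq
    have e2 := congrArg Prod.snd heq
    simp only at e1 e2
    funext i j
    by_cases hdom : 1 ≤ j ∧ j ≤ i ∧ i ≤ n
    · by_cases hi : i ≤ i₁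
      · have h := congrFun (congrFun e1 i) j
        rwa [if_pos ⟨hdom.1, hdom.2.1, hi⟩, if_pos ⟨hdom.1, hdom.2.1, hi⟩] at h
      · by_cases hji : j ≤ i₁
        · rw [(mt_forward h1 h2' hτ hd).2.1 i j (by omega) hdom.2.2 hdom.1 hji,
            (mt_forward h1 h2' hτ' hd').2.1 i j (by omega) hdom.2.2 hdom.1 hji]
        · have h := congrFun (congrFun e2 (i - i₁)) (j - i₁)
          rw [if_pos ⟨by omega, by omega, by omega⟩,
            if_pos ⟨by omega, by omega, by omega⟩] at h
          have ea : i - i₁ + i₁ = i := by omega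
          have eb : j - i₁ + i₁ = j := by omega
          rw [ea, eb] at h
          have g1 := mt_ge hτ j i hdom.1 hdom.2.1 hdom.2.2
          have g2 := mt_ge hτ' j i hdom.1 hdom.2.1 hdom.2.2
          omega
    · rw [hτ.1 i j hdom, hτ'.1 i j hdom]
  · -- SurjOn
    rintro ⟨σ₁, σ₂⟩ ⟨hσ₁, hσ₂⟩
    obtain ⟨hg, hgd⟩ := glue_spec h1 h2' hσ₁ hσ₂
    obtain ⟨g1, g2⟩ := glue_image h1 h2' hσ₁ hσ₂
    refine ⟨glueMT n i₁ σ₁ σ₂, ⟨hg, hgd⟩, ?_⟩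
    simp only [Prod.mk.injEq]
    exact ⟨g1, g2⟩
end

section
/- Let η_n(i₁,...,i_k) denote the number of monotone triangles of size n in which rows i₁ < i₂ < ... < i_k (with all i_m in {1,...,n-1}) are all distinguished. Then η_n(i₁,...,i_k) = A(i₁)·A(i₂-i₁)·...·A(i_k-i_{k-1})·A(n-i_k), where A(m) is the number of monotone triangles of size m (with A(0)=1). -/
open Finset

lemma rowmono {n : ℕ} {τ : ℕ → ℕ → ℕ} (h : IsMT n τ) {a : ℕ} (ha : a ≤ n)
    {j j' : ℕ} (h1 : 1 ≤ j) (h2 : j ≤ j') (h3 : j' ≤ a) : τ a j + (j' - j) ≤ τ a j' := by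
  obtain ⟨d, rfl⟩ := Nat.exists_eq_add_of_le h2
  induction d with
  | zero => simp
  | succ d ih =>
    have e : j + (d + 1) = (j + d) + 1 := by omega
    rw [e]
    have hlt : τ a (j + d) < τ a (j + d + 1) :=
      h.2.2.1 a (j + d) (le_add_right h1) (by omega) ha
    have := ih (by omega)
    omega

lemma lastrow {m : ℕ} {σ : ℕ → ℕ → ℕ} (h : IsMT m σ) : Distinguished m σ m := by
  intro l h1 h2
  have hub : σ m l + (m - l) ≤ σ m m := rowmono h le_rfl h1 h2 le_rfl
  have hlb : σ m 1 + (l - 1) ≤ σ m l := rowmono h le_rfl le_rfl h1 h2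
  have b1 := h.2.1 m 1 le_rfl (by omega) le_rfl
  have b2 := h.2.1 m m (by omega) le_rfl le_rfl
  omega

lemma frozen {n i : ℕ} {τ : ℕ → ℕ → ℕ} (hτ : IsMT n τ) (hd : Distinguished n τ i) :
    ∀ a, i ≤ a → a ≤ n → ∀ j, 1 ≤ j → j ≤ i → τ a j = j := by
  intro a ha
  induction a, ha using Nat.le_induction with
  | base => intro _ j h1 h2; exact hd j h1 h2
  | succ a ha ih =>
    intro han
    have ih := ih (by omega)
    have key : ∀ j, j ≤ i → 1 ≤ j → τ (a+1) j = j := by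
      intro j
      induction j with
      | zero => omega
      | succ j ihj =>
        intro h2 h1
        have hub : τ (a+1) (j+1) ≤ τ a (j+1) := by
          have := (hτ.2.2.2 (a+1) (j+1) h1 (by omega) han).1
          simpa using this
        rw [ih (j+1) h1 h2] at hub
        rcases Nat.eq_zero_or_pos j with hj0 | hjpos
        · subst hj0
          have := (hτ.2.1 (a+1) 1 le_rfl (by omega) han).1
          simp only [Nat.zero_add] at hub ⊢
          omega
        · have hprev := ihj (by omega) hjpos
          have hlt : τ (a+1) j < τ (a+1) (j+1) :=
            hτ.2.2.1 (a+1) j hjpos (by omega) han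
          omega
    intro j h1 h2; exact key j h2 h1

lemma above_ub {n i : ℕ} {τ : ℕ → ℕ → ℕ} (hτ : IsMT n τ) (hd : Distinguished n τ i)
    (hin : i ≤ n) : ∀ q a, a + q = i → ∀ b, 1 ≤ b → b ≤ a → τ a b ≤ b + (i - a) := by
  intro q
  induction q with
  | zero =>
    intro a haq b hb1 hb2
    have : a = i := by omega
    subst this
    rw [hd b hb1 hb2]; omega
  | succ q ih =>
    intro a haq b hb1 hb2
    have key : τ a b ≤ τ (a+1) (b+1) := by
      have := (hτ.2.2.2 (a+1) b hb1 (by omega) (by omega)).2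
      simpa using this
    have := ih (a+1) (by omega) (b+1) (by omega) (by omega)
    omega

def upperT (i : ℕ) (τ : ℕ → ℕ → ℕ) : ℕ → ℕ → ℕ :=
  fun a b => if 1 ≤ b ∧ b ≤ a ∧ a ≤ i then τ a b else 0

def lowerT (n i : ℕ) (τ : ℕ → ℕ → ℕ) : ℕ → ℕ → ℕ :=
  fun q s => if 1 ≤ s ∧ s ≤ q ∧ q ≤ n - i then τ (i + q) (i + s) - i else 0

def glueT (n i : ℕ) (σ ρ : ℕ → ℕ → ℕ) : ℕ → ℕ → ℕ :=
  fun a b => if 1 ≤ b ∧ b ≤ a ∧ a ≤ n then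
    (if a ≤ i then σ a b else if b ≤ i then b else ρ (a - i) (b - i) + i) else 0

section Split
variable {n i : ℕ} {τ : ℕ → ℕ → ℕ}

lemma upper_isMT (hτ : IsMT n τ) (hd : Distinguished n τ i) (hin : i ≤ n) :
    IsMT i (upperT i τ) := by
  refine ⟨fun a b h => by simp [upperT, h], ?_, ?_, ?_⟩
  · intro a b h1 h2 h3
    have hdom : 1 ≤ b ∧ b ≤ a ∧ a ≤ i := ⟨h1, h2, h3⟩
    simp only [upperT, if_pos hdom]
    have := (hτ.2.1 a b h1 h2 (le_trans h3 hin)).1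
    have hub := above_ub hτ hd hin (i - a) a (by omega) b h1 h2
    omega
  · intro a b h1 h2 h3
    have hd1 : 1 ≤ b ∧ b ≤ a ∧ a ≤ i := ⟨h1, by omega, h3⟩
    have hd2 : 1 ≤ b + 1 ∧ b + 1 ≤ a ∧ a ≤ i := ⟨by omega, by omega, h3⟩
    simp only [upperT, if_pos hd1, if_pos hd2]
    exact hτ.2.2.1 a b h1 h2 (le_trans h3 hin)
  · intro a b h1 h2 h3
    have hd1 : 1 ≤ b ∧ b ≤ a ∧ a ≤ i := ⟨h1, by omega, h3⟩
    have hd2 : 1 ≤ b + 1 ∧ b + 1 ≤ a ∧ a ≤ i := ⟨by omega, by omega, h3⟩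
    have hd3 : 1 ≤ b ∧ b ≤ a - 1 ∧ a - 1 ≤ i := ⟨h1, by omega, by omega⟩
    simp only [upperT, if_pos hd1, if_pos hd2, if_pos hd3]
    exact hτ.2.2.2 a b h1 h2 (le_trans h3 hin)

lemma lower_entry_lb (hτ : IsMT n τ) (hd : Distinguished n τ i) (hi : 1 ≤ i)
    {q s : ℕ} (h1 : 1 ≤ s) (h2 : s ≤ q) (h3 : i + q ≤ n) : i + s ≤ τ (i + q) (i + s) := by
  have hfz : τ (i + q) i = i := frozen hτ hd (i + q) (by omega) h3 i hi le_rfl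
  have := rowmono hτ h3 hi (show i ≤ i + s by omega) (by omega)
  omega

lemma lower_isMT (hτ : IsMT n τ) (hd : Distinguished n τ i) (hi : 1 ≤ i) (hin : i ≤ n) :
    IsMT (n - i) (lowerT n i τ) := by
  refine ⟨fun a b h => by simp [lowerT, h], ?_, ?_, ?_⟩
  · intro q s h1 h2 h3
    have hdom : 1 ≤ s ∧ s ≤ q ∧ q ≤ n - i := ⟨h1, h2, h3⟩
    simp only [lowerT, if_pos hdom]
    have hlb := lower_entry_lb hτ hd hi h1 h2 (by omega)
    have hub := (hτ.2.1 (i + q) (i + s) (by omega) (by omega) (by omega)).2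
    omega
  · intro q s h1 h2 h3
    have hd1 : 1 ≤ s ∧ s ≤ q ∧ q ≤ n - i := ⟨h1, by omega, h3⟩
    have hd2 : 1 ≤ s + 1 ∧ s + 1 ≤ q ∧ q ≤ n - i := ⟨by omega, by omega, h3⟩
    simp only [lowerT, if_pos hd1, if_pos hd2]
    have hlb := lower_entry_lb hτ hd hi h1 (show s ≤ q by omega) (by omega)
    have hlt : τ (i + q) (i + s) < τ (i + q) (i + s + 1) :=
      hτ.2.2.1 (i + q) (i + s) (by omega) (by omega) (by omega)
    have he : i + (s + 1) = i + s + 1 := by omega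
    rw [he]
    omega
  · intro q s h1 h2 h3
    have hd1 : 1 ≤ s ∧ s ≤ q ∧ q ≤ n - i := ⟨h1, by omega, h3⟩
    have hd2 : 1 ≤ s + 1 ∧ s + 1 ≤ q ∧ q ≤ n - i := ⟨by omega, by omega, h3⟩
    have hd3 : 1 ≤ s ∧ s ≤ q - 1 ∧ q - 1 ≤ n - i := ⟨h1, by omega, by omega⟩
    simp only [lowerT, if_pos hd1, if_pos hd2, if_pos hd3]
    have hint := hτ.2.2.2 (i + q) (i + s) (by omega) (by omega) (by omega)
    have he1 : i + q - 1 = i + (q - 1) := by omega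
    have he2 : i + (s + 1) = i + s + 1 := by omega
    rw [he1] at hint
    rw [he2]
    have lb1 := lower_entry_lb (q := q) (s := s) hτ hd hi h1 (by omega) (by omega)
    have lb2 := lower_entry_lb (q := q - 1) (s := s) hτ hd hi h1 (by omega) (by omega)
    have lb3 := lower_entry_lb (q := q) (s := s + 1) hτ hd hi (by omega) (by omega) (by omega)
    omega

lemma glue_split (hτ : IsMT n τ) (hd : Distinguished n τ i) (hi : 1 ≤ i) (hin : i ≤ n) :
    glueT n i (upperT i τ) (lowerT n i τ) = τ := by
  funext a b
  by_cases hdom : 1 ≤ b ∧ b ≤ a ∧ a ≤ n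
  · simp only [glueT, if_pos hdom]
    by_cases hai : a ≤ i
    · simp [upperT, hdom.1, hdom.2.1, hai]
    · by_cases hbi : b ≤ i
      · simp only [if_neg hai, if_pos hbi]
        exact (frozen hτ hd a (by omega) hdom.2.2 b hdom.1 hbi).symm
      · simp only [if_neg hai, if_neg hbi]
        have hdl : 1 ≤ b - i ∧ b - i ≤ a - i ∧ a - i ≤ n - i := ⟨by omega, by omega, by omega⟩
        simp only [lowerT, if_pos hdl]
        have he1 : i + (a - i) = a := by omega
        have he2 : i + (b - i) = b := by omega
        rw [he1, he2]
        have lb := lower_entry_lb hτ hd hi (show 1 ≤ b - i by omega) (show b - i ≤ a - i by omega)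
          (by omega)
        rw [he1, he2] at lb
        omega
  · rw [hτ.1 a b hdom]
    simp [glueT, hdom]

end Split

section Glue
variable {n i : ℕ} {σ ρ : ℕ → ℕ → ℕ}

lemma glue_isMT (hσ : IsMT i σ) (hρ : IsMT (n - i) ρ) (hi : 1 ≤ i) (hin : i < n) :
    IsMT n (glueT n i σ ρ) := by
  have hlr := lastrow hσ
  refine ⟨fun a b h => by simp [glueT, h], ?_, ?_, ?_⟩
  · intro a b h1 h2 h3
    have hdom : 1 ≤ b ∧ b ≤ a ∧ a ≤ n := ⟨h1, h2, h3⟩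
    simp only [glueT, if_pos hdom]
    by_cases hai : a ≤ i
    · simp only [if_pos hai]
      have := hσ.2.1 a b h1 h2 hai
      omega
    · simp only [if_neg hai]
      by_cases hbi : b ≤ i
      · simp only [if_pos hbi]; omega
      · simp only [if_neg hbi]
        have := hρ.2.1 (a - i) (b - i) (by omega) (by omega) (by omega)
        omega
  · intro a b h1 h2 h3
    have hdom : 1 ≤ b ∧ b ≤ a ∧ a ≤ n := ⟨h1, by omega, h3⟩
    have hdom2 : 1 ≤ b + 1 ∧ b + 1 ≤ a ∧ a ≤ n := ⟨by omega, by omega, h3⟩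
    simp only [glueT, if_pos hdom, if_pos hdom2]
    by_cases hai : a ≤ i
    · simp only [if_pos hai]
      exact hσ.2.2.1 a b h1 h2 hai
    · simp only [if_neg hai]
      by_cases hb1 : b + 1 ≤ i
      · simp only [if_pos (show b ≤ i by omega), if_pos hb1]; omega
      · by_cases hbi : b ≤ i
        · -- b = i
          simp only [if_pos hbi, if_neg hb1]
          have : b + 1 - i = 1 := by omega
          rw [this]
          have := hρ.2.1 (a - i) 1 le_rfl (by omega) (by omega)
          omega
        · simp only [if_neg hbi, if_neg hb1]
          have he : b + 1 - i = (b - i) + 1 := by omega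
          rw [he]
          have := hρ.2.2.1 (a - i) (b - i) (by omega) (by omega) (by omega)
          omega
  · intro a b h1 h2 h3
    have hdom : 1 ≤ b ∧ b ≤ a ∧ a ≤ n := ⟨h1, by omega, h3⟩
    have hdom2 : 1 ≤ b + 1 ∧ b + 1 ≤ a ∧ a ≤ n := ⟨by omega, by omega, h3⟩
    have hdom3 : 1 ≤ b ∧ b ≤ a - 1 ∧ a - 1 ≤ n := ⟨h1, by omega, by omega⟩
    simp only [glueT, if_pos hdom, if_pos hdom2, if_pos hdom3]
    by_cases hai : a ≤ i
    · simp only [if_pos hai, if_pos (show a - 1 ≤ i by omega)]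
      exact hσ.2.2.2 a b h1 h2 hai
    · simp only [if_neg hai]
      by_cases ha1 : a - 1 ≤ i
      · -- a = i + 1
        have hbA : b ≤ i := by omega
        simp only [if_pos ha1, if_pos hbA]
        have heq : a - 1 = i := by omega
        rw [heq, hlr b h1 hbA]
        constructor
        · exact le_rfl
        · by_cases hb1 : b + 1 ≤ i
          · simp only [if_pos hb1]; omega
          · simp only [if_neg hb1]
            have := hρ.2.1 (a - i) (b + 1 - i) (by omega) (by omega) (by omega)
            omega
      · simp only [if_neg ha1]
        by_cases hb1 : b + 1 ≤ i
        · simp only [if_pos (show b ≤ i by omega), if_pos hb1]; omega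
        · by_cases hbi : b ≤ i
          · -- b = i
            simp only [if_pos hbi, if_neg hb1]
            have := hρ.2.1 (a - i) (b + 1 - i) (by omega) (by omega) (by omega)
            omega
          · simp only [if_neg hbi, if_neg hb1]
            have hint := hρ.2.2.2 (a - i) (b - i) (by omega) (by omega) (by omega)
            have he1 : a - 1 - i = a - i - 1 := by omega
            have he2 : b + 1 - i = (b - i) + 1 := by omega
            rw [he1, he2]
            omega

lemma glue_dist (hσ : IsMT i σ) (hi : 1 ≤ i) (hin : i < n) :
    Distinguished n (glueT n i σ ρ) i := by
  intro l h1 h2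
  have hdom : 1 ≤ l ∧ l ≤ i ∧ i ≤ n := ⟨h1, h2, by omega⟩
  simp only [glueT, if_pos hdom, if_pos (le_refl i)]
  exact lastrow hσ l h1 h2

lemma upper_glue (hσ : IsMT i σ) (hin : i ≤ n) : upperT i (glueT n i σ ρ) = σ := by
  funext a b
  by_cases hdom : 1 ≤ b ∧ b ≤ a ∧ a ≤ i
  · have hdom2 : 1 ≤ b ∧ b ≤ a ∧ a ≤ n := ⟨hdom.1, hdom.2.1, by omega⟩
    simp only [upperT, glueT, if_pos hdom, if_pos hdom2, if_pos hdom.2.2]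
  · simp only [upperT, if_neg hdom]
    exact (hσ.1 a b hdom).symm

lemma lower_glue (hρ : IsMT (n - i) ρ) (hi : 1 ≤ i) : lowerT n i (glueT n i σ ρ) = ρ := by
  funext q s
  by_cases hdom : 1 ≤ s ∧ s ≤ q ∧ q ≤ n - i
  · have hdom2 : 1 ≤ i + s ∧ i + s ≤ i + q ∧ i + q ≤ n := ⟨by omega, by omega, by omega⟩
    simp only [lowerT, glueT, if_pos hdom, if_pos hdom2,
      if_neg (show ¬ i + q ≤ i by omega), if_neg (show ¬ i + s ≤ i by omega)]
    have he1 : i + q - i = q := by omega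
    have he2 : i + s - i = s := by omega
    rw [he1, he2]
    omega
  · simp only [lowerT, if_neg hdom]
    exact (hρ.1 q s hdom).symm

end Glue

lemma dist_iff {n i : ℕ} {τ : ℕ → ℕ → ℕ} (hτ : IsMT n τ) (hd : Distinguished n τ i)
    (hi : 1 ≤ i) {q : ℕ} (hq : i + q ≤ n) :
    Distinguished n τ (i + q) ↔ Distinguished (n - i) (lowerT n i τ) q := by
  constructor
  · intro h l h1 h2
    have hdom : 1 ≤ l ∧ l ≤ q ∧ q ≤ n - i := ⟨h1, h2, by omega⟩
    simp only [lowerT, if_pos hdom]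
    rw [h (i + l) (by omega) (by omega)]
    omega
  · intro h l h1 h2
    by_cases hli : l ≤ i
    · exact frozen hτ hd (i + q) (by omega) hq l h1 hli
    · have hs := h (l - i) (by omega) (by omega)
      have hdom : 1 ≤ l - i ∧ l - i ≤ q ∧ q ≤ n - i := ⟨by omega, by omega, by omega⟩
      simp only [lowerT, if_pos hdom] at hs
      have he : i + (l - i) = l := by omega
      rw [he] at hs
      have lb := lower_entry_lb (q := q) (s := l - i) hτ hd hi (by omega) (by omega) (by omega)
      rw [he] at lb
      omega

lemma MT_subset_finite (n : ℕ) (S : Set (ℕ → ℕ → ℕ)) (hS : ∀ τ ∈ S, IsMT n τ) :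
    S.Finite := by
  classical
  let f : (ℕ → ℕ → ℕ) → (Fin (n + 1) → Fin (n + 1) → Fin (n + 1)) :=
    fun τ a b => ⟨min (τ a b) n, by omega⟩
  have hinj : Set.InjOn f S := by
    intro τ hτ σ hσ hfe
    have hτ' := hS τ hτ
    have hσ' := hS σ hσ
    funext a b
    by_cases hdom : 1 ≤ b ∧ b ≤ a ∧ a ≤ n
    · have h1 := hτ'.2.1 a b hdom.1 hdom.2.1 hdom.2.2
      have h2 := hσ'.2.1 a b hdom.1 hdom.2.1 hdom.2.2
      have := congrFun (congrFun hfe ⟨a, by omega⟩) ⟨b, by omega⟩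
      simp only [f, Fin.mk.injEq] at this
      omega
    · rw [hτ'.1 a b hdom, hσ'.1 a b hdom]
  exact Set.Finite.of_finite_image (Set.toFinite _) hinj

lemma ncard_prod' {α β : Type*} (s : Set α) (t : Set β) :
    (s ×ˢ t).ncard = s.ncard * t.ncard := by
  rw [← Nat.card_coe_set_eq, ← Nat.card_coe_set_eq, ← Nat.card_coe_set_eq,
    Nat.card_congr (Equiv.Set.prod s t), Nat.card_prod]

lemma split_count (n i : ℕ) (hi : 1 ≤ i) (hin : i < n) (R : ℕ → Prop) :
    {τ | IsMT n τ ∧ Distinguished n τ i ∧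
        ∀ q, q ≤ n - i → R q → Distinguished n τ (i + q)}.ncard =
      MTcount i *
        {ρ | IsMT (n - i) ρ ∧ ∀ q, q ≤ n - i → R q → Distinguished (n - i) ρ q}.ncard := by
  classical
  set T : Set (ℕ → ℕ → ℕ) := {σ | IsMT i σ} with hT
  set U : Set (ℕ → ℕ → ℕ) :=
    {ρ | IsMT (n - i) ρ ∧ ∀ q, q ≤ n - i → R q → Distinguished (n - i) ρ q} with hU
  set S : Set (ℕ → ℕ → ℕ) := {τ | IsMT n τ ∧ Distinguished n τ i ∧
        ∀ q, q ≤ n - i → R q → Distinguished n τ (i + q)} with hS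
  have hbij : Set.BijOn (fun p : (ℕ → ℕ → ℕ) × (ℕ → ℕ → ℕ) => glueT n i p.1 p.2) (T ×ˢ U) S := by
    refine ⟨?_, ?_, ?_⟩
    · rintro ⟨σ, ρ⟩ ⟨hσ, hρ, hρd⟩
      have hG : IsMT n (glueT n i σ ρ) := glue_isMT hσ hρ hi hin
      have hGd : Distinguished n (glueT n i σ ρ) i := glue_dist hσ hi hin
      refine ⟨hG, hGd, ?_⟩
      intro q hq hr
      rw [dist_iff hG hGd hi (by omega), lower_glue hρ hi]
      exact hρd q hq hr
    · rintro ⟨σ, ρ⟩ ⟨hσ0, hρ0, hρd⟩ ⟨σ', ρ'⟩ ⟨hσ0', hρ0', hρd'⟩ hfe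
      simp only at hfe
      have hσ : IsMT i σ := hσ0
      have hρ : IsMT (n - i) ρ := hρ0
      have hσ' : IsMT i σ' := hσ0'
      have hρ' : IsMT (n - i) ρ' := hρ0'
      have e1 : σ = σ' := by
        rw [← upper_glue (n := n) (ρ := ρ) hσ (by omega), ← upper_glue (n := n) (ρ := ρ') hσ' (by omega), hfe]
      have e2 : ρ = ρ' := by
        rw [← lower_glue (σ := σ) hρ hi, ← lower_glue (σ := σ') hρ' hi, hfe]
      simp [e1, e2]
    · intro τ ⟨hτ, hd, hdd⟩
      refine ⟨(upperT i τ, lowerT n i τ), ⟨?_, ?_, ?_⟩, ?_⟩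
      · exact upper_isMT hτ hd (by omega)
      · exact lower_isMT hτ hd hi (by omega)
      · intro q hq hr
        rw [← dist_iff hτ hd hi (by omega)]
        exact hdd q hq hr
      · exact glue_split hτ hd hi (by omega)
  have him : (fun p : (ℕ → ℕ → ℕ) × (ℕ → ℕ → ℕ) => glueT n i p.1 p.2) '' (T ×ˢ U) = S :=
    hbij.image_eq
  rw [← him, Set.ncard_image_of_injOn hbij.injOn, ncard_prod']
  rfl

theorem main_aux : ∀ k, 1 ≤ k → ∀ (n : ℕ) (idx : ℕ → ℕ),
    (∀ m, 1 ≤ m → m ≤ k → 1 ≤ idx m ∧ idx m ≤ n - 1) →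
    (∀ m, 1 ≤ m → m < k → idx m < idx (m + 1)) →
    {τ | IsMT n τ ∧ ∀ m, 1 ≤ m → m ≤ k → Distinguished n τ (idx m)}.ncard =
      MTcount (idx 1) * (∏ m ∈ Finset.Icc 2 k, MTcount (idx m - idx (m - 1))) *
        MTcount (n - idx k) := by
  intro k hk
  induction k, hk using Nat.le_induction with
  | base =>
    intro n idx hrange hmono
    obtain ⟨hi1, hi2⟩ := hrange 1 le_rfl le_rfl
    have hn2 : 2 ≤ n := by omega
    have hin : idx 1 < n := by omega
    have hse : {τ | IsMT n τ ∧ ∀ m, 1 ≤ m → m ≤ 1 → Distinguished n τ (idx m)} =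
        {τ | IsMT n τ ∧ Distinguished n τ (idx 1) ∧
          ∀ q, q ≤ n - idx 1 → False → Distinguished n τ (idx 1 + q)} := by
      ext τ
      constructor
      · rintro ⟨h1, h2⟩
        exact ⟨h1, h2 1 le_rfl le_rfl, fun q _ h => h.elim⟩
      · rintro ⟨h1, h2, _⟩
        refine ⟨h1, fun m hm1 hm2 => ?_⟩
        have : m = 1 := by omega
        subst this
        exact h2
    rw [hse, split_count n (idx 1) hi1 hin (fun _ => False)]
    have hse2 : {ρ | IsMT (n - idx 1) ρ ∧
        ∀ q, q ≤ n - idx 1 → False → Distinguished (n - idx 1) ρ q} =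
        {ρ | IsMT (n - idx 1) ρ} := by
      ext ρ
      exact ⟨fun h => h.1, fun h => ⟨h, fun q _ hf => hf.elim⟩⟩
    rw [hse2]
    rw [show Finset.Icc 2 1 = (∅ : Finset ℕ) from Finset.Icc_eq_empty (by omega)]
    simp [MTcount]
  | succ k hk IH =>
    intro n idx hrange hmono
    set i := idx 1 with hidef
    obtain ⟨hi1, hi2⟩ := hrange 1 le_rfl (by omega)
    have hn2 : 2 ≤ n := by omega
    have hin : i < n := by omega
    -- chain monotonicity
    have hchain : ∀ d m, 1 ≤ m → m + d ≤ k + 1 → idx m + d ≤ idx (m + d) := by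
      intro d
      induction d with
      | zero => intro m _ _; simp
      | succ d ihd =>
        intro m hm1 hm2
        have h1 := ihd m hm1 (by omega)
        have h2 := hmono (m + d) (by omega) (by omega)
        have he : m + (d + 1) = (m + d) + 1 := by omega
        rw [he]
        omega
    have hge : ∀ m, 2 ≤ m → m ≤ k + 1 → i + (m - 1) ≤ idx m := by
      intro m hm1 hm2
      have := hchain (m - 1) 1 le_rfl (by omega)
      have he : 1 + (m - 1) = m := by omega
      rw [he] at this
      omega
    set R : ℕ → Prop := fun q => ∃ m, 2 ≤ m ∧ m ≤ k + 1 ∧ q = idx m - i with hR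
    have hse : {τ | IsMT n τ ∧ ∀ m, 1 ≤ m → m ≤ k + 1 → Distinguished n τ (idx m)} =
        {τ | IsMT n τ ∧ Distinguished n τ i ∧
          ∀ q, q ≤ n - i → R q → Distinguished n τ (i + q)} := by
      ext τ
      constructor
      · rintro ⟨h1, h2⟩
        refine ⟨h1, h2 1 le_rfl (by omega), ?_⟩
        rintro q hq ⟨m, hm1, hm2, rfl⟩
        have hgem := hge m hm1 hm2
        have he : i + (idx m - i) = idx m := by omega
        rw [he]
        exact h2 m (by omega) hm2
      · rintro ⟨h1, h2, h3⟩
        refine ⟨h1, fun m hm1 hm2 => ?_⟩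
        rcases Nat.eq_or_lt_of_le hm1 with hm | hm
        · rw [← hm]; exact h2
        · have hgem := hge m (by omega) hm2
          have hrm := (hrange m hm1 hm2).2
          have := h3 (idx m - i) (by omega) ⟨m, by omega, hm2, rfl⟩
          have he : i + (idx m - i) = idx m := by omega
          rwa [he] at this
    rw [hse, split_count n i hi1 hin R]
    set idx' : ℕ → ℕ := fun m => idx (m + 1) - i with hidx'
    have hse2 : {ρ | IsMT (n - i) ρ ∧ ∀ q, q ≤ n - i → R q → Distinguished (n - i) ρ q} =
        {ρ | IsMT (n - i) ρ ∧ ∀ m, 1 ≤ m → m ≤ k → Distinguished (n - i) ρ (idx' m)} := by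
      ext ρ
      constructor
      · rintro ⟨h1, h2⟩
        refine ⟨h1, fun m hm1 hm2 => ?_⟩
        have hrm := (hrange (m + 1) (by omega) (by omega)).2
        have hu : idx' m = idx (m + 1) - i := rfl
        exact h2 (idx' m) (by omega) ⟨m + 1, by omega, by omega, rfl⟩
      · rintro ⟨h1, h2⟩
        refine ⟨h1, ?_⟩
        rintro q hq ⟨m, hm1, hm2, rfl⟩
        have he : idx m - i = idx' (m - 1) := by
          have hu : idx' (m - 1) = idx (m - 1 + 1) - i := rfl
          have he2 : m - 1 + 1 = m := by omega
          rw [hu, he2]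
        rw [he]
        exact h2 (m - 1) (by omega) (by omega)
    rw [hse2]
    have hrange' : ∀ m, 1 ≤ m → m ≤ k → 1 ≤ idx' m ∧ idx' m ≤ (n - i) - 1 := by
      intro m hm1 hm2
      have hgem := hge (m + 1) (by omega) (by omega)
      have hrm := (hrange (m + 1) (by omega) (by omega)).2
      constructor
      · simp only [hidx']; omega
      · simp only [hidx']; omega
    have hmono' : ∀ m, 1 ≤ m → m < k → idx' m < idx' (m + 1) := by
      intro m hm1 hm2
      have h1 := hmono (m + 1) (by omega) (by omega)
      have hgem := hge (m + 1) (by omega) (by omega)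
      simp only [hidx']
      omega
    rw [IH (n - i) idx' hrange' hmono']
    -- now the algebra
    have ht1 : idx' 1 = idx 2 - idx 1 := rfl
    have ht3 : (n - i) - idx' k = n - idx (k + 1) := by
      have hgem := hge (k + 1) (by omega) le_rfl
      have hrm := (hrange (k + 1) (by omega) le_rfl).2
      simp only [hidx']
      omega
    have ht2 : ∏ m ∈ Finset.Icc 2 k, MTcount (idx' m - idx' (m - 1)) =
        ∏ m ∈ Finset.Icc 3 (k + 1), MTcount (idx m - idx (m - 1)) := by
      refine Finset.prod_nbij (fun m => m + 1) ?_ ?_ ?_ ?_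
      · intro m hm
        simp only [Finset.mem_Icc] at hm ⊢
        omega
      · intro a _ b _ h
        have h' : a + 1 = b + 1 := h
        omega
      · intro m hm
        simp only [Finset.coe_Icc, Set.mem_Icc] at hm
        refine ⟨m - 1, ?_, ?_⟩
        · simp only [Finset.coe_Icc, Set.mem_Icc]; omega
        · show m - 1 + 1 = m; omega
      · intro m hm
        simp only [Finset.mem_Icc] at hm
        congr 1
        have hgem := hge m (by omega) (by omega)
        have hgem' := hge (m + 1) (by omega) (by omega)
        simp only [hidx']
        have he1 : m + 1 - 1 = m := by omega
        have he2 : m - 1 + 1 = m := by omega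
        rw [he1, he2]
        omega
    have hsplit : ∏ m ∈ Finset.Icc 2 (k + 1), MTcount (idx m - idx (m - 1)) =
        MTcount (idx 2 - idx 1) * ∏ m ∈ Finset.Icc 3 (k + 1), MTcount (idx m - idx (m - 1)) := by
      have hins : Finset.Icc 2 (k + 1) = insert 2 (Finset.Icc 3 (k + 1)) := by
        ext x
        simp only [Finset.mem_insert, Finset.mem_Icc]
        omega
      rw [hins, Finset.prod_insert (by simp)]
    rw [ht1, ht2, ht3, hsplit]
    ring

theorem stmt_15 (n k : ℕ) (hk : 1 ≤ k) (idx : ℕ → ℕ)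
    (hrange : ∀ m, 1 ≤ m → m ≤ k → 1 ≤ idx m ∧ idx m ≤ n - 1)
    (hmono : ∀ m, 1 ≤ m → m < k → idx m < idx (m + 1)) :
    {τ | IsMT n τ ∧ ∀ m, 1 ≤ m → m ≤ k → Distinguished n τ (idx m)}.ncard =
      MTcount (idx 1) * (∏ m ∈ Finset.Icc 2 k, MTcount (idx m - idx (m - 1))) *
        MTcount (n - idx k) := by
  exact main_aux k hk n idx hrange hmono
end

section
/- For any k row indices i₁ < ... < i_k in {1,...,n-1}, the number of monotone triangles of size n with rows i₁,...,i_k all distinguished is at most A(n-k). -/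
open Finset

/-! ### Auxiliary lemmas for `stmt_16` -/

section StmtAux

/-- Entries of a monotone triangle satisfy `j ≤ τ i j`. -/
lemma mt_lb {n : ℕ} {τ : ℕ → ℕ → ℕ} (h : IsMT n τ) :
    ∀ j i, 1 ≤ j → j ≤ i → i ≤ n → j ≤ τ i j := by
  intro j
  induction j with
  | zero => intro i h1 _ _; omega
  | succ j ih =>
    intro i h1 h2 h3
    rcases Nat.eq_zero_or_pos j with hj | hj
    · subst hj
      exact (h.2.1 i 1 le_rfl (by omega) h3).1
    · have hA := ih i hj (by omega) h3
      have hB := h.2.2.1 i j hj (by omega) h3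
      omega

/-- Going up a column (weakly) decreases entries. -/
lemma mt_V1 {n : ℕ} {τ : ℕ → ℕ → ℕ} (h : IsMT n τ) {j a b : ℕ}
    (hj : 1 ≤ j) (hja : j ≤ a) (hab : a ≤ b) (hbn : b ≤ n) :
    τ b j ≤ τ a j := by
  induction b, hab using Nat.le_induction with
  | base => exact le_rfl
  | succ b hab ih =>
    have h1 := (h.2.2.2 (b + 1) j hj (by omega) hbn).1
    simp only [Nat.add_sub_cancel] at h1
    exact h1.trans (ih (by omega))

/-- Going down along a diagonal (weakly) increases entries. -/
lemma mt_V2 {n : ℕ} {τ : ℕ → ℕ → ℕ} (h : IsMT n τ) {j a b : ℕ}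
    (hj : 1 ≤ j) (hja : j ≤ a) (hab : a ≤ b) (hbn : b ≤ n) :
    τ a j ≤ τ b (j + (b - a)) := by
  induction b, hab using Nat.le_induction with
  | base => simp
  | succ b hab ih =>
    have h2 := (h.2.2.2 (b + 1) (j + (b - a)) (by omega) (by omega) hbn).2
    simp only [Nat.add_sub_cancel] at h2
    have he : j + (b + 1 - a) = j + (b - a) + 1 := by omega
    rw [he]
    exact (ih (by omega)).trans h2

/-- Below a distinguished row `d`, the columns `1,…,d` are frozen. -/
lemma mt_frozen {n : ℕ} {τ : ℕ → ℕ → ℕ} (h : IsMT n τ) {d : ℕ}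
    (hd : Distinguished n τ d) {i j : ℕ}
    (hdi : d ≤ i) (hin : i ≤ n) (hj : 1 ≤ j) (hjd : j ≤ d) :
    τ i j = j := by
  have h1 := mt_V1 h hj hjd hdi hin
  rw [hd j hj hjd] at h1
  have h2 := mt_lb h j i hj (le_trans hjd hdi) hin
  omega

/-- The set of monotone triangles of a given size is finite. -/
lemma mt_finite (m : ℕ) : {τ : ℕ → ℕ → ℕ | IsMT m τ}.Finite := by
  have hinj : Set.InjOn
      (fun (τ : ℕ → ℕ → ℕ) (i j : Fin (m + 1)) =>
        (⟨min (τ i j) m, by omega⟩ : Fin (m + 1)))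
      {τ | IsMT m τ} := by
    intro τ1 h1 τ2 h2 heq
    funext i j
    by_cases hij : 1 ≤ j ∧ j ≤ i ∧ i ≤ m
    · have b1 := (h1.2.1 i j hij.1 hij.2.1 hij.2.2).2
      have b2 := (h2.2.1 i j hij.1 hij.2.1 hij.2.2).2
      have hfun := congrFun (congrFun heq ⟨i, by omega⟩) ⟨j, by omega⟩
      simp only [Fin.mk.injEq] at hfun
      omega
    · rw [h1.1 i j hij, h2.1 i j hij]
  exact Set.Finite.of_finite_image (Set.toFinite _) hinj

/-- Strict monotonicity of the index sequence, quantitative form. -/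
lemma idx_mono {k : ℕ} {idx : ℕ → ℕ}
    (hmono : ∀ m, 1 ≤ m → m < k → idx m < idx (m + 1)) :
    ∀ a b, 1 ≤ a → a ≤ b → b ≤ k → idx a + (b - a) ≤ idx b := by
  intro a b ha hab
  induction b, hab using Nat.le_induction with
  | base => simp
  | succ b hab ih =>
    intro hbk
    have h1 := ih (by omega)
    have h2 := hmono b (by omega) (by omega)
    omega

/-- `m ≤ idx m` for indices in range. -/
lemma idx_ge {n k : ℕ} {idx : ℕ → ℕ}
    (hrange : ∀ m, 1 ≤ m → m ≤ k → 1 ≤ idx m ∧ idx m ≤ n - 1)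
    (hmono : ∀ m, 1 ≤ m → m < k → idx m < idx (m + 1)) :
    ∀ m, 1 ≤ m → m ≤ k → m ≤ idx m := by
  intro m h1 h2
  have hA := (hrange 1 le_rfl (by omega)).1
  have hB := idx_mono hmono 1 m le_rfl h1 h2
  omega

/-- The number of distinguished rows at or before the `r`-th non-distinguished row. -/
def eF (k : ℕ) (idx : ℕ → ℕ) (r : ℕ) : ℕ :=
  Nat.findGreatest (fun m => 1 ≤ m ∧ m ≤ k ∧ idx m < r + m) k

lemma eF_le (k : ℕ) (idx : ℕ → ℕ) (r : ℕ) : eF k idx r ≤ k :=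
  Nat.findGreatest_le k

lemma eF_spec {k : ℕ} {idx : ℕ → ℕ} {r : ℕ} (h : eF k idx r ≠ 0) :
    1 ≤ eF k idx r ∧ eF k idx r ≤ k ∧ idx (eF k idx r) < r + eF k idx r := by
  have h2 : Nat.findGreatest (fun m => 1 ≤ m ∧ m ≤ k ∧ idx m < r + m) k = eF k idx r := rfl
  exact Nat.findGreatest_of_ne_zero h2 h

lemma eF_lt {k : ℕ} {idx : ℕ → ℕ}
    (hmono : ∀ m, 1 ≤ m → m < k → idx m < idx (m + 1))
    {r m : ℕ} (h1 : 1 ≤ m) (h2 : m ≤ eF k idx r) : idx m < r + m := by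
  have hP := eF_spec (k := k) (idx := idx) (r := r) (by omega)
  have hM := idx_mono hmono m (eF k idx r) h1 h2 hP.2.1
  omega

lemma eF_ge {k : ℕ} {idx : ℕ → ℕ} {r m : ℕ}
    (h1 : eF k idx r < m) (h2 : m ≤ k) : r + m ≤ idx m := by
  by_contra hc
  exact Nat.findGreatest_is_greatest h1 h2 ⟨by omega, h2, by omega⟩

lemma eF_mono (k : ℕ) (idx : ℕ → ℕ) {r r' : ℕ} (h : r ≤ r') :
    eF k idx r ≤ eF k idx r' :=
  Nat.findGreatest_mono (fun m hm => ⟨hm.1, hm.2.1, by omega⟩) le_rfl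

/-- The compression map: delete distinguished rows and the frozen columns. -/
def sig (n k : ℕ) (idx : ℕ → ℕ) (τ : ℕ → ℕ → ℕ) : ℕ → ℕ → ℕ :=
  fun r s => if 1 ≤ s ∧ s ≤ r ∧ r ≤ n - k
    then τ (r + eF k idx r) (eF k idx r + s) - eF k idx r else 0

end StmtAux

section StmtMain

variable {n k : ℕ} {idx : ℕ → ℕ}

lemma nk_ge (hk : 1 ≤ k)
    (hrange : ∀ m, 1 ≤ m → m ≤ k → 1 ≤ idx m ∧ idx m ≤ n - 1)
    (hmono : ∀ m, 1 ≤ m → m < k → idx m < idx (m + 1)) : k + 1 ≤ n := by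
  have h1 := hrange k hk le_rfl
  have h2 := idx_ge hrange hmono k hk le_rfl
  omega

lemma sig_isMT (hk : 1 ≤ k)
    (hrange : ∀ m, 1 ≤ m → m ≤ k → 1 ≤ idx m ∧ idx m ≤ n - 1)
    (hmono : ∀ m, 1 ≤ m → m < k → idx m < idx (m + 1))
    {τ : ℕ → ℕ → ℕ} (hτ : IsMT n τ)
    (hdist : ∀ m, 1 ≤ m → m ≤ k → Distinguished n τ (idx m)) :
    IsMT (n - k) (sig n k idx τ) := by
  have hkn : k + 1 ≤ n := nk_ge hk hrange hmono
  refine ⟨?_, ?_, ?_, ?_⟩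
  · -- zero outside the triangle
    intro r s hrs
    simp only [sig, if_neg hrs]
  · -- bounds
    intro r s hs hsr hrN
    set e := eF k idx r with he
    have hek : e ≤ k := eF_le k idx r
    have hin : r + e ≤ n := by omega
    have f1 : e + s ≤ τ (r + e) (e + s) := mt_lb hτ (e + s) (r + e) (by omega) (by omega) hin
    have hval : sig n k idx τ r s = τ (r + e) (e + s) - e := by
      simp only [sig, if_pos (⟨hs, hsr, hrN⟩ : 1 ≤ s ∧ s ≤ r ∧ r ≤ n - k), ← he]
    rw [hval]
    constructor
    · omega
    · rcases Nat.lt_or_ge e k with hlt | hge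
      · -- e < k : use the next distinguished row as a ceiling
        have u2 : r + (e + 1) ≤ idx (e + 1) :=
          eF_ge (k := k) (idx := idx) (r := r) (by omega) (by omega)
        have hI : idx (e + 1) ≤ n - 1 := (hrange (e + 1) (by omega) (by omega)).2
        have v1 : τ (r + e) (e + s) ≤ τ (idx (e + 1)) (e + s + (idx (e + 1) - (r + e))) :=
          mt_V2 hτ (by omega) (by omega) (by omega) (by omega)
        have v2 : τ (idx (e + 1)) (e + s + (idx (e + 1) - (r + e)))
            = e + s + (idx (e + 1) - (r + e)) :=
          hdist (e + 1) (by omega) (by omega) _ (by omega) (by omega)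
        have v3 := idx_mono hmono (e + 1) k (by omega) (by omega) le_rfl
        have v4 := (hrange k hk le_rfl).2
        omega
      · -- e = k
        have hub := (hτ.2.1 (r + e) (e + s) (by omega) (by omega) hin).2
        omega
  · -- strictly increasing rows
    intro r s hs hsr hrN
    set e := eF k idx r with he
    have hek : e ≤ k := eF_le k idx r
    have hin : r + e ≤ n := by omega
    have f1 : e + s ≤ τ (r + e) (e + s) := mt_lb hτ (e + s) (r + e) (by omega) (by omega) hin
    have hst := hτ.2.2.1 (r + e) (e + s) (by omega) (by omega) hin
    have hval1 : sig n k idx τ r s = τ (r + e) (e + s) - e := by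
      simp only [sig, if_pos (⟨hs, by omega, hrN⟩ : 1 ≤ s ∧ s ≤ r ∧ r ≤ n - k), ← he]
    have hval2 : sig n k idx τ r (s + 1) = τ (r + e) (e + s + 1) - e := by
      simp only [sig, if_pos (⟨by omega, by omega, hrN⟩ : 1 ≤ s + 1 ∧ s + 1 ≤ r ∧ r ≤ n - k), ← he]
      rw [← Nat.add_assoc]
    rw [hval1, hval2]
    omega
  · -- interlacing
    intro r₀ s hs hsr hrN
    obtain ⟨r, rfl⟩ : ∃ r, r₀ = r + 1 := ⟨r₀ - 1, by omega⟩
    simp only [Nat.add_sub_cancel]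
    set e' := eF k idx r with he'
    set e := eF k idx (r + 1) with he
    have he'e : e' ≤ e := by
      rw [he', he]; exact eF_mono k idx (by omega)
    have hek : e ≤ k := by rw [he]; exact eF_le k idx (r + 1)
    have hi'n : r + 1 + e ≤ n := by omega
    have hi''n : r + e' ≤ n := by omega
    have f1 : e + s ≤ τ (r + 1 + e) (e + s) :=
      mt_lb hτ (e + s) (r + 1 + e) (by omega) (by omega) hi'n
    have f2 : e' + s ≤ τ (r + e') (e' + s) :=
      mt_lb hτ (e' + s) (r + e') (by omega) (by omega) hi''n
    have f3 : e + s + 1 ≤ τ (r + 1 + e) (e + s + 1) :=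
      mt_lb hτ (e + s + 1) (r + 1 + e) (by omega) (by omega) hi'n
    have hval1 : sig n k idx τ (r + 1) s = τ (r + 1 + e) (e + s) - e := by
      simp only [sig, if_pos (⟨hs, hsr.le, hrN⟩ : 1 ≤ s ∧ s ≤ r + 1 ∧ r + 1 ≤ n - k), ← he]
    have hval2 : sig n k idx τ r s = τ (r + e') (e' + s) - e' := by
      simp only [sig, if_pos (⟨hs, by omega, by omega⟩ : 1 ≤ s ∧ s ≤ r ∧ r ≤ n - k), ← he']
    have hval3 : sig n k idx τ (r + 1) (s + 1) = τ (r + 1 + e) (e + s + 1) - e := by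
      simp only [sig,
        if_pos (⟨by omega, by omega, hrN⟩ : 1 ≤ s + 1 ∧ s + 1 ≤ r + 1 ∧ r + 1 ≤ n - k), ← he]
      rw [← Nat.add_assoc]
    rw [hval1, hval2, hval3]
    rcases Nat.eq_or_lt_of_le he'e with heq | hlt
    · -- no distinguished row was skipped
      have a1 : τ (r + 1 + e) (e + s) ≤ τ (r + e) (e + s) :=
        mt_V1 hτ (by omega) (by omega) (by omega) hi'n
      have a2 := mt_V2 hτ (j := e + s) (a := r + e) (b := r + 1 + e)
        (by omega) (by omega) (by omega) hi'n
      have hsh : e + s + ((r + 1 + e) - (r + e)) = e + s + 1 := by omega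
      rw [hsh] at a2
      rw [heq] at f2 ⊢
      omega
    · -- distinguished rows were skipped; they sit exactly in the gap
      have u1 : idx e < (r + 1) + e :=
        eF_lt (k := k) (r := r + 1) hmono (by omega) he.le
      have u2 : r + (e' + 1) ≤ idx (e' + 1) :=
        eF_ge (k := k) (idx := idx) (r := r) (by omega) (by omega)
      have u3 := idx_mono hmono (e' + 1) e (by omega) (by omega) hek
      have hdE : idx e = r + 1 + e - 1 := by omega
      have hdE' : idx (e' + 1) = r + e' + 1 := by omega
      have d1 := hdist e (by omega) hek
      have d2 := hdist (e' + 1) (by omega) (by omega)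
      rw [hdE] at d1
      rw [hdE'] at d2
      have hd1 : r + 1 + e - 1 = r + e := by omega
      rw [hd1] at d1
      -- first inequality
      have b1 : τ (r + 1 + e) (e + s) ≤ τ (r + e) (e + s) :=
        mt_V1 hτ (by omega) (by omega) (by omega) hi'n
      have b2 : τ (r + e) (e + s) = e + s := d1 (e + s) (by omega) (by omega)
      -- second inequality
      have c1 := mt_V2 hτ (j := e' + s) (a := r + e') (b := r + e' + 1)
        (by omega) (by omega) (by omega) (by omega)
      have hsh : e' + s + ((r + e' + 1) - (r + e')) = e' + s + 1 := by omega
      rw [hsh] at c1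
      have c2 : τ (r + e' + 1) (e' + s + 1) = e' + s + 1 := d2 (e' + s + 1) (by omega) (by omega)
      omega

lemma sig_injOn (hk : 1 ≤ k)
    (hrange : ∀ m, 1 ≤ m → m ≤ k → 1 ≤ idx m ∧ idx m ≤ n - 1)
    (hmono : ∀ m, 1 ≤ m → m < k → idx m < idx (m + 1)) :
    Set.InjOn (sig n k idx)
      {τ | IsMT n τ ∧ ∀ m, 1 ≤ m → m ≤ k → Distinguished n τ (idx m)} := by
  have hkn : k + 1 ≤ n := nk_ge hk hrange hmono
  intro τ1 h1 τ2 h2 heq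
  funext i j
  by_cases htri : 1 ≤ j ∧ j ≤ i ∧ i ≤ n
  swap
  · rw [h1.1.1 i j htri, h2.1.1 i j htri]
  obtain ⟨hj, hji, hin⟩ := htri
  by_cases hD : ∃ m, 1 ≤ m ∧ m ≤ k ∧ idx m = i
  · obtain ⟨m, hm1, hm2, hm3⟩ := hD
    have e1 : τ1 i j = j := by
      have := h1.2 m hm1 hm2 j hj (by omega)
      rwa [hm3] at this
    have e2 : τ2 i j = j := by
      have := h2.2 m hm1 hm2 j hj (by omega)
      rwa [hm3] at this
    rw [e1, e2]
  · push_neg at hD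
    set E := Nat.findGreatest (fun m => 1 ≤ m ∧ m ≤ k ∧ idx m < i) k with hE
    have hEk : E ≤ k := by rw [hE]; exact Nat.findGreatest_le k
    have hgt : ∀ m, E < m → m ≤ k → i < idx m := by
      intro m hm1 hm2
      by_contra hc
      have hne := hD m (by omega) hm2
      have hle : m ≤ E := by
        rw [hE]
        exact Nat.le_findGreatest hm2 ⟨by omega, hm2, by omega⟩
      omega
    have hEi : E < i := by
      rcases Nat.eq_zero_or_pos E with h0 | h0
      · omega
      · have hP : 1 ≤ E ∧ E ≤ k ∧ idx E < i :=
          Nat.findGreatest_of_ne_zero hE.symm (by omega)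
        have w0 := idx_ge hrange hmono E h0 hEk
        omega
    set r := i - E with hr
    have hr1 : 1 ≤ r := by omega
    have hrN : r ≤ n - k := by
      rcases Nat.lt_or_ge E k with hlt | hge
      · have w1 := hgt (E + 1) (by omega) (by omega)
        have w2 := idx_mono hmono (E + 1) k (by omega) (by omega) le_rfl
        have w3 := (hrange k hk le_rfl).2
        omega
      · omega
    have heqe : eF k idx r = E := by
      have hge2 : E ≤ eF k idx r := by
        rcases Nat.eq_zero_or_pos E with h0 | h0
        · omega
        · have hP : 1 ≤ E ∧ E ≤ k ∧ idx E < i :=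
            Nat.findGreatest_of_ne_zero hE.symm (by omega)
          exact Nat.le_findGreatest hEk ⟨h0, hEk, by omega⟩
      have hle2 : eF k idx r ≤ E := by
        by_contra hc
        push_neg at hc
        have hF := eF_spec (k := k) (idx := idx) (r := r) (by omega)
        have w1 := hgt (E + 1) (by omega) (by omega)
        have w2 := idx_mono hmono (E + 1) (eF k idx r) (by omega) (by omega) hF.2.1
        omega
      omega
    by_cases hjE : j ≤ E
    · -- frozen column
      have hjk : j ≤ k := by omega
      have hP : 1 ≤ E ∧ E ≤ k ∧ idx E < i :=
        Nat.findGreatest_of_ne_zero hE.symm (by omega)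
      have hidxj : idx j < i := by
        rcases Nat.eq_or_lt_of_le hjE with hjE' | hjE'
        · rw [hjE']; exact hP.2.2
        · have w1 := idx_mono hmono j E hj (by omega) hEk
          omega
      have hjidx := idx_ge hrange hmono j hj hjk
      have e1 : τ1 i j = j := mt_frozen h1.1 (h1.2 j hj hjk) (by omega) hin hj hjidx
      have e2 : τ2 i j = j := mt_frozen h2.1 (h2.2 j hj hjk) (by omega) hin hj hjidx
      rw [e1, e2]
    · -- recovered from σ
      push_neg at hjE
      have hcond : 1 ≤ j - E ∧ j - E ≤ r ∧ r ≤ n - k := ⟨by omega, by omega, hrN⟩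
      have hre : r + E = i := by omega
      have hje : E + (j - E) = j := by omega
      have hs1 : sig n k idx τ1 r (j - E) = τ1 i j - E := by
        simp only [sig, if_pos hcond, heqe]
        rw [hre, hje]
      have hs2 : sig n k idx τ2 r (j - E) = τ2 i j - E := by
        simp only [sig, if_pos hcond, heqe]
        rw [hre, hje]
      have hfun := congrFun (congrFun heq r) (j - E)
      rw [hs1, hs2] at hfun
      have g1 := mt_lb h1.1 j i hj hji hin
      have g2 := mt_lb h2.1 j i hj hji hin
      omega

end StmtMain

theorem stmt_16 (n k : ℕ) (hk : 1 ≤ k) (idx : ℕ → ℕ)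
    (hrange : ∀ m, 1 ≤ m → m ≤ k → 1 ≤ idx m ∧ idx m ≤ n - 1)
    (hmono : ∀ m, 1 ≤ m → m < k → idx m < idx (m + 1)) :
    {τ | IsMT n τ ∧ ∀ m, 1 ≤ m → m ≤ k → Distinguished n τ (idx m)}.ncard ≤
      MTcount (n - k) := by
  rw [MTcount]
  refine Set.ncard_le_ncard_of_injOn (sig n k idx) ?_ ?_ (mt_finite (n - k))
  · intro τ hτ
    exact sig_isMT hk hrange hmono hτ.1 hτ.2
  · exact sig_injOn hk hrange hmono
end
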